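/- Let X be a smooth projective curve, S a skyscraper sheaf of length ℓ, and f : V → S a surjective morphism from a vector bundle V. Set δ = ℓ. Then the framed module (V, f) is δ-(semi)stable if and only if the vector bundle Ker(f) is (semi)stable in the usual slope sense. -/
import Mathlib


/-- Let `f : V → S` be a surjective morphism from a vector bundle `V` on a smooth projective
curve to a skyscraper sheaf `S` of length `ℓ`, and set `δ = ℓ`.  Then the framed module
`(V, f)` is `δ`-semistable if and only if the vector bundle `Ker f` is slope-semistable.
Sheaves are formalized as modules with degree/rank/length data satisfying the geometric
facts used in the proof: `len ⊤ = ℓ`, `len ≤ ℓ`, `len p = 0 ↔ p = ⊥`,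
`deg(W' ∩ Ker f) = deg W' − len(f(W'))`, `rk(W' ∩ Ker f) = rk W'`, `rk ⊤ > 0`, `rk ⊥ = 0`
and proper nonzero subsheaves have positive rank. -/
theorem framed_semistable_iff_kernel_semistable
    {R V S : Type} [CommRing R]
    [AddCommGroup V] [Module R V] [AddCommGroup S] [Module R S] [Nontrivial S]
    (f : V →ₗ[R] S) (hf : Function.Surjective f)
    (ℓ : ℕ) (δ : ℤ) (hδ : δ = (ℓ : ℤ))
    (deg : Submodule R V → ℤ) (rk : Submodule R V → ℕ)
    (len : Submodule R S → ℕ)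
    (hlen_top : len ⊤ = ℓ)
    (hlen_le : ∀ p : Submodule R S, len p ≤ ℓ)
    (hlen_bot : ∀ p : Submodule R S, len p = 0 ↔ p = ⊥)
    (hdeg_int : ∀ W' : Submodule R V,
      deg (W' ⊓ LinearMap.ker f) = deg W' - (len (W'.map f) : ℤ))
    (hrk_int : ∀ W' : Submodule R V, rk (W' ⊓ LinearMap.ker f) = rk W')
    (hrk_top : 0 < rk (⊤ : Submodule R V))
    (hrk_bot : rk (⊥ : Submodule R V) = 0)
    (hrk_pos : ∀ W' : Submodule R V, W' ≠ ⊥ → 0 < rk W') :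
    -- `δ`-semistability of the framed module `(V, f)` …
    (∀ W' : Submodule R V, W' ≠ ⊥ → W' ≠ ⊤ →
      ((W' ≤ LinearMap.ker f →
          deg W' * (rk (⊤ : Submodule R V) : ℤ) ≤ (deg ⊤ - δ) * (rk W' : ℤ)) ∧
       (¬ W' ≤ LinearMap.ker f →
          (deg W' - δ) * (rk (⊤ : Submodule R V) : ℤ) ≤ (deg ⊤ - δ) * (rk W' : ℤ))))
    ↔
    -- … iff `Ker f` is slope-semistable.
    (∀ W₁ : Submodule R V, W₁ ≤ LinearMap.ker f → W₁ ≠ ⊥ →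
      deg W₁ * (rk (LinearMap.ker f) : ℤ) ≤ deg (LinearMap.ker f) * (rk W₁ : ℤ)) := by
  have hK_ne_top : LinearMap.ker f ≠ ⊤ := by
    obtain ⟨s, hs⟩ := exists_ne (0 : S)
    obtain ⟨v, hv⟩ := hf s
    intro h
    have hv0 : f v = 0 := (h ▸ Submodule.mem_top : v ∈ LinearMap.ker f)
    exact hs (by rw [← hv, hv0])
  have hmap_top : (⊤ : Submodule R V).map f = ⊤ := by
    rw [Submodule.map_top, LinearMap.range_eq_top.mpr hf]
  have hdegK : deg (LinearMap.ker f) = deg ⊤ - δ := by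
    have h := hdeg_int ⊤
    rwa [top_inf_eq, hmap_top, hlen_top, ← hδ] at h
  have hrkK : rk (LinearMap.ker f) = rk (⊤ : Submodule R V) := by
    have h := hrk_int ⊤
    rwa [top_inf_eq] at h
  constructor
  · intro h W₁ hle hne
    have hW₁_ne_top : W₁ ≠ ⊤ := fun h' => hK_ne_top (top_le_iff.mp (h' ▸ hle))
    have h1 := (h W₁ hne hW₁_ne_top).1 hle
    rw [hdegK, hrkK]
    exact h1
  · intro h W' hne _
    constructor
    · intro hle
      have h1 := h W' hle hne
      rwa [hdegK, hrkK] at h1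
    · intro _
      have hle : W' ⊓ LinearMap.ker f ≤ LinearMap.ker f := inf_le_right
      have hrk : rk (W' ⊓ LinearMap.ker f) = rk W' := hrk_int W'
      have hW₁ne : W' ⊓ LinearMap.ker f ≠ ⊥ := by
        intro hb
        have hp := hrk_pos W' hne
        rw [← hrk, hb, hrk_bot] at hp
        exact lt_irrefl 0 hp
      have h1 := h _ hle hW₁ne
      rw [hdegK, hrkK, hdeg_int W', hrk] at h1
      have hlen := hlen_le (W'.map f)
      have hd : deg W' - δ ≤ deg W' - (len (W'.map f) : ℤ) := by
        rw [hδ]; omega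
      calc (deg W' - δ) * (rk (⊤ : Submodule R V) : ℤ)
          ≤ (deg W' - (len (W'.map f) : ℤ)) * (rk (⊤ : Submodule R V) : ℤ) :=
            mul_le_mul_of_nonneg_right hd (by positivity)
        _ ≤ (deg ⊤ - δ) * (rk W' : ℤ) := h1
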